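/- Let ξ = (ξ_t)_{t≥0} be a real Lévy process (in particular with almost surely càdlàg paths), let Θ be a standard exponential random variable independent of ξ, and let r > 0. If P( ξ_Θ ∈ rℤ ) = 1, then P( ξ_t ∈ rℤ ) = 1 for every t ≥ 0. -/

import Mathlib

/-!
By independence, `(Θ, ξ)` has law `Exp(1) ⊗ law(ξ)`, so Fubini turns "`ξ_Θ ∈ rℤ` a.s." into
"`ξ_s ∈ rℤ` a.s." for `Exp(1)`-almost every `s`, that is, for Lebesgue-almost every `s ≥ 0`. Every
`t ≥ 0` is a limit from the right of such good times, and since `rℤ` is closed, right-continuity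
of the paths carries the property over to `t`. Right-continuity also makes evaluation at the
random time measurable on path space: `f s` is the limit of `f` at the dyadic approximations of
`s` from above.
-/

open MeasureTheory ProbabilityTheory Filter Set

/-- A real Lévy process on `[0, ∞)` (indexed by `ℝ`, only times `≥ 0` matter):
measurable, starts at `0` a.s., has independent and stationary increments,
and almost surely càdlàg sample paths on `[0, ∞)`. -/
def IsLevyProcess {Ω : Type*} [MeasurableSpace Ω] (P : Measure Ω) (ξ : ℝ → Ω → ℝ) : Prop :=
  (∀ t : ℝ, Measurable (ξ t)) ∧
  Measurable (Function.uncurry ξ) ∧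
  (∀ᵐ ω ∂P, ξ 0 ω = 0) ∧
  -- independent increments
  (∀ (n : ℕ) (t : ℕ → ℝ), Monotone t → t 0 = 0 →
    iIndepFun
      (fun i : Fin n => fun ω => ξ (t (i.1 + 1)) ω - ξ (t i.1) ω) P) ∧
  -- stationary increments
  (∀ s t : ℝ, 0 ≤ s → 0 ≤ t →
    Measure.map (fun ω => ξ (t + s) ω - ξ t ω) P = Measure.map (ξ s) P) ∧
  -- almost surely càdlàg paths on `[0, ∞)`
  (∀ᵐ ω ∂P, ∀ t : ℝ, 0 ≤ t →
    ContinuousWithinAt (fun s => ξ s ω) (Set.Ici t) t ∧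
    (0 < t → ∃ l : ℝ, Tendsto (fun s => ξ s ω) (nhdsWithin t (Set.Iio t)) (nhds l)))

lemma isClosed_setOf_eq_mul_intCast (r : ℝ) : IsClosed {x : ℝ | ∃ k : ℤ, x = r * k} := by
  convert AddSubgroup.isClosed_of_discrete (H := AddSubgroup.zmultiples r) using 1
  ext x
  simp [AddSubgroup.mem_zmultiples_iff, eq_comm, mul_comm]

section Exponential

variable {r : ℝ}

lemma ae_nonneg_expMeasure : ∀ᵐ x ∂expMeasure r, 0 ≤ x := by
  have h := (ae_withDensity_iff (μ := volume) (p := fun x : ℝ => 0 ≤ x)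
    (measurable_exponentialPDFReal r).ennreal_ofReal).2
  refine h (Eventually.of_forall fun x hx => ?_)
  by_contra hneg
  exact hx (exponentialPDF_of_neg (not_le.1 hneg))

lemma restrict_Ici_absolutelyContinuous_expMeasure (hr : 0 < r) :
    volume.restrict (Ici (0 : ℝ)) ≪ expMeasure r := by
  have hpos : ∀ᵐ x ∂volume.restrict (Ici (0 : ℝ)), exponentialPDF r x ≠ 0 := by
    filter_upwards [ae_restrict_mem measurableSet_Ici] with x hx
    rw [exponentialPDF_of_nonneg hx]
    exact (ENNReal.ofReal_pos.2 (by positivity)).ne'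
  refine (withDensity_absolutelyContinuous'
    (measurable_exponentialPDFReal r).ennreal_ofReal.aemeasurable hpos).trans ?_
  rw [← restrict_withDensity measurableSet_Ici]
  exact Measure.absolutelyContinuous_of_le Measure.restrict_le_self

end Exponential

open Topology Metric

section Dyadic

noncomputable def dyadicCeil (n : ℕ) (s : ℝ) : ℝ := ⌈s * 2 ^ n⌉ / 2 ^ n

lemma le_dyadicCeil (n : ℕ) (s : ℝ) : s ≤ dyadicCeil n s := by
  rw [dyadicCeil, le_div_iff₀ (by positivity)]
  exact Int.le_ceil _

lemma dyadicCeil_lt (n : ℕ) (s : ℝ) : dyadicCeil n s < s + (2 ^ n)⁻¹ := by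
  rw [dyadicCeil, div_lt_iff₀ (by positivity), add_mul, inv_mul_cancel₀ (by positivity)]
  exact Int.ceil_lt_add_one _

lemma tendsto_dyadicCeil (s : ℝ) : Tendsto (fun n => dyadicCeil n s) atTop (𝓝[≥] s) := by
  have hlim : Tendsto (fun n : ℕ => s + (2 ^ n)⁻¹) atTop (𝓝 s) := by
    simpa using (tendsto_const_nhds (x := s)).add (tendsto_inv_atTop_zero.comp
      (tendsto_pow_atTop_atTop_of_one_lt (one_lt_two (α := ℝ))))
  refine tendsto_nhdsWithin_iff.2 ⟨?_, Eventually.of_forall (le_dyadicCeil · s)⟩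
  exact tendsto_of_tendsto_of_tendsto_of_le_of_le tendsto_const_nhds hlim
    (le_dyadicCeil · s) (fun n => (dyadicCeil_lt n s).le)

lemma measurable_apply_dyadicCeil {E : Type*} [MeasurableSpace E] (n : ℕ) :
    Measurable fun p : ℝ × (ℝ → E) => p.2 (dyadicCeil n p.1) := by
  have heval : Measurable fun q : (ℤ → E) × ℤ => q.1 q.2 :=
    measurable_from_prod_countable_left fun k => measurable_pi_apply k
  have hrestrict : Measurable fun f : ℝ → E => fun k : ℤ => f (k / 2 ^ n) :=
    measurable_pi_lambda _ fun k => measurable_pi_apply _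
  exact heval.comp ((hrestrict.comp measurable_snd).prodMk
    (measurable_fst.mul_const _).ceil)

variable {E : Type*} [PseudoEMetricSpace E]

/-- A measurable substitute for `{(s, f) | f s ∈ closure S}`, to which it reduces where `f` is
right-continuous: the evaluation `(s, f) ↦ f s` is not measurable for the product σ-algebra. -/
def dyadicApproachSet (S : Set E) : Set (ℝ × (ℝ → E)) :=
  {p | Tendsto (fun n => infEDist (p.2 (dyadicCeil n p.1)) S) atTop (𝓝 0)}

lemma measurableSet_dyadicApproachSet [MeasurableSpace E] [OpensMeasurableSpace E] (S : Set E) :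
    MeasurableSet (dyadicApproachSet S) :=
  measurableSet_tendsto_fun (fun n => measurable_infEDist.comp (measurable_apply_dyadicCeil n))
    measurable_const

lemma mk_mem_dyadicApproachSet_iff {S : Set E} {s : ℝ} {f : ℝ → E}
    (hf : ContinuousWithinAt f (Ici s) s) :
    (s, f) ∈ dyadicApproachSet S ↔ f s ∈ closure S := by
  have hlim : Tendsto (fun n => infEDist (f (dyadicCeil n s)) S) atTop (𝓝 (infEDist (f s) S)) :=
    (continuous_infEDist.tendsto _).comp (hf.tendsto.comp (tendsto_dyadicCeil s))
  rw [mem_closure_iff_infEDist_zero]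
  exact ⟨fun h => tendsto_nhds_unique hlim h, fun h => by rwa [h] at hlim⟩

end Dyadic

section RandomTime

variable {Ω E : Type*} [MeasurableSpace Ω] {P : Measure Ω} [PseudoEMetricSpace E]
  [MeasurableSpace E] [OpensMeasurableSpace E] {ξ : ℝ → Ω → E} {S : Set E}

lemma ae_ae_mem_of_ae_mem_at_indepFun [IsFiniteMeasure P] (hS : IsClosed S)
    (hmeas : ∀ t, Measurable (ξ t))
    (hrc : ∀ᵐ ω ∂P, ∀ t, 0 ≤ t → ContinuousWithinAt (fun s => ξ s ω) (Ici t) t)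
    {Θ : Ω → ℝ} (hΘ : Measurable Θ) (hΘ_nonneg : ∀ᵐ ω ∂P, 0 ≤ Θ ω)
    (hind : IndepFun Θ (fun ω t => ξ t ω) P) (h : ∀ᵐ ω ∂P, ξ (Θ ω) ω ∈ S) :
    ∀ᵐ s ∂P.map Θ, ∀ᵐ ω ∂P, ξ s ω ∈ S := by
  set X : Ω → ℝ → E := fun ω t => ξ t ω
  have hX : Measurable X := measurable_pi_lambda _ hmeas
  have hA := measurableSet_dyadicApproachSet S
  have hjoint : ∀ᵐ ω ∂P, (Θ ω, X ω) ∈ dyadicApproachSet S := by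
    filter_upwards [h, hrc, hΘ_nonneg] with ω hω hrcω hΘω
    exact (mk_mem_dyadicApproachSet_iff (hrcω _ hΘω)).2 (subset_closure hω)
  have hprod : ∀ᵐ p ∂(P.map Θ).prod (P.map X), p ∈ dyadicApproachSet S := by
    rw [← (indepFun_iff_map_prod_eq_prod_map_map hΘ.aemeasurable hX.aemeasurable).1 hind]
    exact (ae_map_iff (hΘ.prodMk hX).aemeasurable hA).2 hjoint
  have hlaw_nonneg : ∀ᵐ s ∂P.map Θ, 0 ≤ s :=
    (ae_map_iff hΘ.aemeasurable measurableSet_Ici).2 hΘ_nonneg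
  filter_upwards [Measure.ae_ae_of_ae_prod hprod, hlaw_nonneg] with s hs hs_nonneg
  filter_upwards [(ae_map_iff hX.aemeasurable (measurable_prodMk_left hA)).1 hs, hrc]
    with ω hω hrcω
  rw [← hS.closure_eq]
  exact (mk_mem_dyadicApproachSet_iff (hrcω s hs_nonneg)).1 hω

end RandomTime

lemma frequently_nhdsGT_of_ae_restrict_Ioi {p : ℝ → Prop} {t : ℝ}
    (h : ∀ᵐ s ∂volume.restrict (Ioi t), p s) : ∃ᶠ s in 𝓝[>] t, p s := by
  intro hev
  obtain ⟨u, htu, hsub⟩ := mem_nhdsGT_iff_exists_Ioo_subset.1 hev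
  have hfalse : ∀ᵐ s ∂volume.restrict (Ioo t u), False := by
    filter_upwards [ae_restrict_of_ae_restrict_of_subset Ioo_subset_Ioi_self h,
      ae_restrict_mem measurableSet_Ioo] with s hs hmem using hsub hmem hs
  rw [eventually_false_iff_eq_bot, ae_eq_bot, Measure.restrict_eq_zero, Real.volume_Ioo,
    ENNReal.ofReal_eq_zero] at hfalse
  linarith [mem_Ioi.1 htu]

lemma ae_mem_of_frequently_ae_mem {Ω E : Type*} [MeasurableSpace Ω] {P : Measure Ω}
    [TopologicalSpace E] {ξ : ℝ → Ω → E} {S : Set E} (hS : IsClosed S) {t : ℝ}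
    (hrc : ∀ᵐ ω ∂P, ContinuousWithinAt (fun s => ξ s ω) (Ioi t) t)
    (h : ∃ᶠ s in 𝓝[>] t, ∀ᵐ ω ∂P, ξ s ω ∈ S) : ∀ᵐ ω ∂P, ξ t ω ∈ S := by
  obtain ⟨s, hs, hgood⟩ := exists_seq_forall_of_frequently h
  filter_upwards [hrc, ae_all_iff.2 hgood] with ω hω hgoodω
  exact hS.mem_of_tendsto (hω.tendsto.comp hs) (Eventually.of_forall hgoodω)

theorem arithmetic_at_exponential_time_general
    {Ω : Type*} [MeasurableSpace Ω] (P : Measure Ω) [IsProbabilityMeasure P]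
    (ξ : ℝ → Ω → ℝ) (hξ : IsLevyProcess P ξ)
    (Θ : Ω → ℝ) (hΘmeas : Measurable Θ)
    (hΘ : Measure.map Θ P = ProbabilityTheory.expMeasure 1)
    (hind : IndepFun Θ (fun ω => fun t : ℝ => ξ t ω) P)
    (r : ℝ)
    (h : P {ω | ∃ k : ℤ, ξ (Θ ω) ω = r * k} = 1) :
    ∀ t : ℝ, 0 ≤ t → P {ω | ∃ k : ℤ, ξ t ω = r * k} = 1 := by
  obtain ⟨hmeas, hjoint, -, -, -, hcadlag⟩ := hξ
  set S : Set ℝ := {x | ∃ k : ℤ, x = r * k}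
  have hS : IsClosed S := isClosed_setOf_eq_mul_intCast r
  have hrc : ∀ᵐ ω ∂P, ∀ t, 0 ≤ t → ContinuousWithinAt (fun s => ξ s ω) (Ici t) t := by
    filter_upwards [hcadlag] with ω hω t ht using (hω t ht).1
  have hΘS : ∀ᵐ ω ∂P, ξ (Θ ω) ω ∈ S :=
    (mem_ae_iff_prob_eq_one (hjoint.comp (hΘmeas.prodMk measurable_id) hS.measurableSet)).2 h
  have hΘ_nonneg : ∀ᵐ ω ∂P, 0 ≤ Θ ω :=
    (ae_map_iff hΘmeas.aemeasurable measurableSet_Ici).1 (hΘ ▸ ae_nonneg_expMeasure)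
  have hgood : ∀ᵐ s ∂volume.restrict (Ici 0), ∀ᵐ ω ∂P, ξ s ω ∈ S :=
    restrict_Ici_absolutelyContinuous_expMeasure one_pos
      (hΘ ▸ ae_ae_mem_of_ae_mem_at_indepFun hS hmeas hrc hΘmeas hΘ_nonneg hind hΘS)
  intro t ht
  refine (mem_ae_iff_prob_eq_one (hmeas t hS.measurableSet)).1
    (ae_mem_of_frequently_ae_mem hS ?_ (frequently_nhdsGT_of_ae_restrict_Ioi ?_))
  · filter_upwards [hrc] with ω hω using (hω t ht).mono Ioi_subset_Ici_self
  · exact ae_restrict_of_ae_restrict_of_subset (Ioi_subset_Ici ht) hgood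

/-- If `ξ` is a Lévy process, `Θ` is a standard exponential time independent of `ξ`,
and `ξ_Θ ∈ r ℤ` almost surely for some `r > 0`, then `ξ_t ∈ r ℤ` almost surely
for every `t ≥ 0`. -/
theorem arithmetic_at_exponential_time
    {Ω : Type*} [MeasurableSpace Ω] (P : Measure Ω) [IsProbabilityMeasure P]
    (ξ : ℝ → Ω → ℝ) (hξ : IsLevyProcess P ξ)
    (Θ : Ω → ℝ) (hΘmeas : Measurable Θ)
    (hΘ : Measure.map Θ P = ProbabilityTheory.expMeasure 1)
    (hind : IndepFun Θ (fun ω => fun t : ℝ => ξ t ω) P)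
    (r : ℝ) (hr : 0 < r)
    (h : P {ω | ∃ k : ℤ, ξ (Θ ω) ω = r * k} = 1) :
    ∀ t : ℝ, 0 ≤ t → P {ω | ∃ k : ℤ, ξ t ω = r * k} = 1 :=
  arithmetic_at_exponential_time_general P ξ hξ Θ hΘmeas hΘ hind r h
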